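/- Let σ:[0,∞)→P be a piecewise constant switching signal with average dwell time τ_a > 0 and chatter bound N_0 ≥ 1, i.e., the number of discontinuities N_σ(t,s) on every interval (s,t] satisfies N_σ(t,s) ≤ N_0 + (t−s)/τ_a. Fix τ ∈ (0, τ_a), an initial time τ_0 ≥ 0, and an integer N > (τ_a/(τ_a−τ))·(N_0 − τ/τ_a). Then there exists T with 0 ≤ T ≤ (N−1)τ such that σ has no discontinuity on the interval (τ_0+T, τ_0+T+τ]. -/

import Mathlib

/-!
If every window `(τ₀ + T, τ₀ + T + τ]` with `T ∈ [0, (N-1)τ]` contained a switch, take a switch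
`x₀ ∈ (τ₀, τ₀ + τ]`; the `N - 1` consecutive windows of length `τ` starting at `x₀` each hold a
further switch, so every interval `(s, x₀ + (N-1)τ]` with `s < x₀` holds at least `N` switches.
The bound on `N` says exactly that `N > N₀ + (N-1)τ/τ_a`, so for `s` close enough to `x₀` this
contradicts the average-dwell-time condition.
-/

open Set

section SwitchCount

variable {S : Set ℝ}

theorem ncard_inter_Ioc_eq_add (hfin : ∀ s t : ℝ, (S ∩ Ioc s t).Finite) {a b c : ℝ}
    (hab : a ≤ b) (hbc : b ≤ c) :
    (S ∩ Ioc a c).ncard = (S ∩ Ioc a b).ncard + (S ∩ Ioc b c).ncard := by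
  rw [← Ioc_union_Ioc_eq_Ioc hab hbc, inter_union_distrib_left]
  exact ncard_union_eq ((Ioc_disjoint_Ioc_of_le le_rfl).mono inter_subset_right inter_subset_right)
    (hfin a b) (hfin b c)

theorem le_ncard_inter_Ioc_of_nonempty_windows (hfin : ∀ s t : ℝ, (S ∩ Ioc s t).Finite)
    {a τ : ℝ} (hτ : 0 ≤ τ) (n : ℕ)
    (hwin : ∀ k < n, (S ∩ Ioc (a + k * τ) (a + (k + 1) * τ)).Nonempty) :
    n ≤ (S ∩ Ioc a (a + n * τ)).ncard := by
  induction n with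
  | zero => exact Nat.zero_le _
  | succ n ih =>
    have hlast : 1 ≤ (S ∩ Ioc (a + n * τ) (a + (n + 1) * τ)).ncard :=
      (ncard_pos (hfin _ _)).2 (hwin n n.lt_succ_self)
    rw [Nat.cast_succ, ncard_inter_Ioc_eq_add hfin (b := a + n * τ)
      (le_add_of_nonneg_right (by positivity)) (by nlinarith)]
    linarith [ih fun k hk => hwin k (Nat.lt_succ_of_lt hk)]

end SwitchCount

theorem mul_add_sub_one_mul_lt_of_lt_div_mul_sub {τa N0 τ N : ℝ} (hτa : 0 < τa) (hτlt : τ < τa)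
    (hN : τa / (τa - τ) * (N0 - τ / τa) < N) : N0 * τa + (N - 1) * τ < N * τa := by
  rw [show τa / (τa - τ) * (N0 - τ / τa) = (N0 * τa - τ) / (τa - τ) by field_simp,
    div_lt_iff₀ (sub_pos.2 hτlt)] at hN
  linarith

theorem average_dwell_time_switch_free_interval_general
    (S : Set ℝ) (τa N0 τ τ0 : ℝ) (N : ℕ)
    (hτa : 0 < τa) (hN0 : 1 ≤ N0)
    (hfin : ∀ s t : ℝ, (S ∩ Set.Ioc s t).Finite)
    (hADT : ∀ s t : ℝ, 0 ≤ s → s < t →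
      ((S ∩ Set.Ioc s t).ncard : ℝ) ≤ N0 + (t - s) / τa)
    (hτ0 : 0 ≤ τ) (hτlt : τ < τa) (hτ00 : 0 ≤ τ0)
    (hN : τa / (τa - τ) * (N0 - τ / τa) < (N : ℝ)) :
    ∃ T : ℝ, 0 ≤ T ∧ T ≤ ((N : ℝ) - 1) * τ ∧
      S ∩ Set.Ioc (τ0 + T) (τ0 + T + τ) = ∅ := by
  have hgap := mul_add_sub_one_mul_lt_of_lt_div_mul_sub hτa hτlt hN
  -- With `N₀ ≥ 1`, `hgap` gives `(N - 1)(τa - τ) > 0`.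
  obtain ⟨n, rfl⟩ : ∃ n, N = n + 1 :=
    Nat.exists_eq_add_one.2 (by exact_mod_cast (show (0 : ℝ) < N by nlinarith))
  push_cast [add_sub_cancel_right] at hgap ⊢
  by_contra! hcover
  obtain ⟨x₀, hx₀S, hτ0x₀, hx₀τ⟩ : (S ∩ Ioc τ0 (τ0 + τ)).Nonempty := by
    simpa using hcover 0 le_rfl (by positivity)
  have hwin : ∀ k < n, (S ∩ Ioc (x₀ + k * τ) (x₀ + (k + 1) * τ)).Nonempty := by
    intro k hk
    have hk' : (k : ℝ) + 1 ≤ n := by exact_mod_cast hk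
    convert hcover (x₀ - τ0 + k * τ) (by nlinarith) (by nlinarith) using 3 <;> ring
  -- `s ≥ 0` makes `hADT` applicable, and `x₀ - s` is smaller than the slack in `hgap`.
  obtain ⟨s, hs_lo, hs_x₀⟩ := exists_between <| max_lt (hτ00.trans_lt hτ0x₀)
    (sub_lt_self x₀ (by linarith : 0 < (n + 1) * τa - N0 * τa - n * τ))
  obtain ⟨hs0, hs_gap⟩ := max_lt_iff.1 hs_lo
  have hcount : (n + 1 : ℝ) ≤ (S ∩ Ioc s (x₀ + n * τ)).ncard := by
    have hfirst : 0 < (S ∩ Ioc s x₀).ncard := (ncard_pos (hfin _ _)).2 ⟨x₀, hx₀S, hs_x₀, le_rfl⟩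
    have hrest := le_ncard_inter_Ioc_of_nonempty_windows hfin hτ0 n hwin
    rw [ncard_inter_Ioc_eq_add hfin hs_x₀.le (by nlinarith)]
    exact_mod_cast (by omega : n + 1 ≤ _)
  have hADT' := hADT s (x₀ + n * τ) hs0.le (by nlinarith)
  have hlen : (x₀ + n * τ - s) / τa < n + 1 - N0 := by
    rw [div_lt_iff₀ hτa]
    linarith
  linarith

/-- Average dwell time lemma. `S ⊆ ℝ` is the (locally finite) set of switching
times (discontinuities) of the switching signal, and the average-dwell-time
condition says that the number of switching times in every interval `(s,t]`
(`t > s ≥ 0`) is at most `N₀ + (t-s)/τ_a`.  Fix `τ ∈ (0, τ_a)`, `τ₀ ≥ 0` and an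
integer `N > (τ_a/(τ_a - τ))·(N₀ - τ/τ_a)`.  Then there is `T ∈ [0, (N-1)τ]`
with no switching time in `(τ₀+T, τ₀+T+τ]`. -/
theorem average_dwell_time_switch_free_interval
    (S : Set ℝ) (τa N0 τ τ0 : ℝ) (N : ℕ)
    (hτa : 0 < τa) (hN0 : 1 ≤ N0)
    (hfin : ∀ s t : ℝ, (S ∩ Set.Ioc s t).Finite)
    (hADT : ∀ s t : ℝ, 0 ≤ s → s < t →
      ((S ∩ Set.Ioc s t).ncard : ℝ) ≤ N0 + (t - s) / τa)
    (hτ0 : 0 ≤ τ) (hττa : 0 < τ) (hτlt : τ < τa) (hτ00 : 0 ≤ τ0)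
    (hN : τa / (τa - τ) * (N0 - τ / τa) < (N : ℝ)) :
    ∃ T : ℝ, 0 ≤ T ∧ T ≤ ((N : ℝ) - 1) * τ ∧
      S ∩ Set.Ioc (τ0 + T) (τ0 + T + τ) = ∅ :=
  average_dwell_time_switch_free_interval_general S τa N0 τ τ0 N hτa hN0 hfin hADT hτ0 hτlt hτ00 hN
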